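/- arXiv:math/0610206 — 2 statements merged into one kernel-verified Lean document; each statement's English description precedes it below -/
import Mathlib

section
/- Fix an integer k ≥ 1. For every polynomial p ∈ ℝ[ξ,η,ζ] of total degree ≤ k, the function (x,y,z) ↦ p(x/(1+z), y/(1+z), z/(1+z)) on Ω∞° belongs to the space Q^{k,k,k−1}_k + span{(x,y,z) ↦ z^k/(1+z)^k} = U̅^{(0),k}(Ω∞). (This is the membership underlying the inclusion P^k(Ω) ⊂ U^{(0),k}(Ω): the H¹-conforming pyramidal element of order k contains all polynomials of degree ≤ k.) -/
noncomputable section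

def PyrInfInt : Set (ℝ × ℝ × ℝ) :=
  {p | 0 < p.1 ∧ p.1 < 1 ∧ 0 < p.2.1 ∧ p.2.1 < 1 ∧ 0 < p.2.2}

def qmon (k a b c : ℕ) : ℝ × ℝ × ℝ → ℝ :=
  fun p => p.1 ^ a * p.2.1 ^ b * p.2.2 ^ c / (1 + p.2.2) ^ k

def Qsp (l m n : ℤ) (k : ℕ) : Submodule ℝ ((ℝ × ℝ × ℝ) → ℝ) :=
  Submodule.span ℝ
    {f | ∃ a b c : ℕ, (a : ℤ) ≤ l ∧ (b : ℤ) ≤ m ∧ (c : ℤ) ≤ n ∧ f = qmon k a b c}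

def Ubar0 (k : ℕ) : Submodule ℝ ((ℝ × ℝ × ℝ) → ℝ) :=
  Qsp k k ((k : ℤ) - 1) k ⊔
    Submodule.span ℝ {fun p : ℝ × ℝ × ℝ => p.2.2 ^ k / (1 + p.2.2) ^ k}

lemma qmon_mem_Qsp (k a b c : ℕ) (ha : a ≤ k) (hb : b ≤ k) (hc : (c : ℤ) ≤ (k : ℤ) - 1) :
    qmon k a b c ∈ Ubar0 k :=
  Submodule.mem_sup_left (Submodule.subset_span
    ⟨a, b, c, by exact_mod_cast ha, by exact_mod_cast hb, hc, rfl⟩)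

lemma qmon_top_mem (k : ℕ) : qmon k 0 0 k ∈ Ubar0 k := by
  apply Submodule.mem_sup_right
  apply Submodule.subset_span
  have : qmon k 0 0 k = fun p : ℝ × ℝ × ℝ => p.2.2 ^ k / (1 + p.2.2) ^ k := by
    funext q; simp [qmon]
  rw [this]; exact rfl

lemma mono_mem (k a b c : ℕ) (hs : a + b + c ≤ k) :
    ∃ w ∈ Ubar0 k, ∀ q ∈ PyrInfInt,
      (q.1 / (1 + q.2.2)) ^ a * (q.2.1 / (1 + q.2.2)) ^ b * (q.2.2 / (1 + q.2.2)) ^ c = w q := by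
  set m := k - (a + b + c) with hm
  refine ⟨fun q => ∑ j ∈ Finset.range (m + 1), (m.choose j : ℝ) * qmon k a b (c + j) q, ?_, ?_⟩
  · have heq : (fun q => ∑ j ∈ Finset.range (m + 1), (m.choose j : ℝ) * qmon k a b (c + j) q)
        = ∑ j ∈ Finset.range (m + 1), (m.choose j : ℝ) • qmon k a b (c + j) := by
      funext q; simp [Finset.sum_apply]
    rw [heq]
    apply Submodule.sum_mem
    intro j hj
    have hj' : j ≤ m := Finset.mem_range_succ_iff.mp hj
    have hmem : qmon k a b (c + j) ∈ Ubar0 k := by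
      by_cases h : c + j = k
      · have ha : a = 0 := by omega
        have hb : b = 0 := by omega
        subst ha; subst hb; rw [h]; exact qmon_top_mem k
      · exact qmon_mem_Qsp k a b (c + j) (by omega) (by omega) (by push_cast; omega)
    exact Submodule.smul_mem _ _ hmem
  · rintro ⟨x, y, z⟩ ⟨hx, _, hy, _, hz⟩
    simp only at *
    have h1 : (0:ℝ) < 1 + z := by linarith
    have h1' : (1:ℝ) + z ≠ 0 := ne_of_gt h1
    have key : ((z + 1) ^ m : ℝ) = ∑ j ∈ Finset.range (m + 1), z ^ j * (m.choose j : ℝ) := by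
      rw [add_pow]; simp
    have hk' : a + b + c + m = k := by omega
    simp only [qmon]
    rw [div_pow, div_pow, div_pow, div_mul_div_comm, div_mul_div_comm,
      ← pow_add, ← pow_add]
    have hden : (1 + z) ^ (a + b + c) * (z + 1) ^ m = (1 + z) ^ k := by
      rw [show (z + 1 : ℝ) = 1 + z by ring, ← pow_add, hk']
    calc x ^ a * y ^ b * z ^ c / (1 + z) ^ (a + b + c)
        = x ^ a * y ^ b * z ^ c * (z + 1) ^ m / (1 + z) ^ k := by
          rw [← hden]; field_simp
      _ = ∑ j ∈ Finset.range (m + 1), (m.choose j : ℝ) * (x ^ a * y ^ b * z ^ (c + j) / (1 + z) ^ k) := by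
          rw [key, Finset.mul_sum, Finset.sum_div]
          refine Finset.sum_congr rfl fun j _ => ?_
          rw [pow_add]; ring

/-- for every polynomial `p ∈ ℝ[ξ,η,ζ]` of total degree `≤ k`, the
0-form pullback `(x,y,z) ↦ p(x/(1+z), y/(1+z), z/(1+z))` belongs to
`U̅^{(0),k}(Ω∞) = Q^{k,k,k−1}_k + span{z^k/(1+z)^k}` on `Ω∞°`;
i.e. `P^k(Ω) ⊂ U^{(0),k}(Ω)`. -/
theorem pullback_zero_form_of_polynomial (k : ℕ) (hk : 1 ≤ k)
    (p : MvPolynomial (Fin 3) ℝ) (hp : p.totalDegree ≤ k) :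
    ∃ w ∈ Ubar0 k,
      ∀ q ∈ PyrInfInt,
        MvPolynomial.eval
            ![q.1 / (1 + q.2.2), q.2.1 / (1 + q.2.2), q.2.2 / (1 + q.2.2)] p = w q := by
  have hmono : ∀ d ∈ p.support, ∃ w ∈ Ubar0 k, ∀ q ∈ PyrInfInt,
      (q.1 / (1 + q.2.2)) ^ d 0 * (q.2.1 / (1 + q.2.2)) ^ d 1 * (q.2.2 / (1 + q.2.2)) ^ d 2 = w q := by
    intro d hd
    apply mono_mem
    have := MvPolynomial.le_totalDegree hd
    have hsum : d.sum (fun _ e => e) = d 0 + d 1 + d 2 := by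
      rw [Finsupp.sum_fintype] <;> simp [Fin.sum_univ_three]
    omega
  choose w hw hweq using hmono
  refine ⟨fun q => ∑ d ∈ p.support.attach, p.coeff d * w d d.2 q, ?_, ?_⟩
  · have heq : (fun q => ∑ d ∈ p.support.attach, p.coeff d * w d d.2 q)
        = ∑ d ∈ p.support.attach, p.coeff (d : Fin 3 →₀ ℕ) • w d d.2 := by
      funext q; simp [Finset.sum_apply]
    rw [heq]
    apply Submodule.sum_mem
    intro d _
    exact Submodule.smul_mem _ _ (hw d d.2)
  · intro q hq
    rw [MvPolynomial.eval_eq', ← Finset.sum_attach]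
    refine Finset.sum_congr rfl fun d _ => ?_
    rw [← hweq d d.2 q hq]
    congr 1
    rw [Fin.prod_univ_three]
    simp [Matrix.cons_val_zero, Matrix.cons_val_one]

end
end

section
/- Fix an integer k ≥ 1 and let P = (P₁,P₂,P₃) : ℝ³ → ℝ³ be a vector field whose components are real polynomials of total degree ≤ k−1. Define u : Ω∞° → ℝ³ (the pullback φ*P of the 1-form P) by u(x,y,z) = ( P₁(φ(x,y,z))/(1+z), P₂(φ(x,y,z))/(1+z), (−x·P₁(φ(x,y,z)) − y·P₂(φ(x,y,z)) + P₃(φ(x,y,z)))/(1+z)² ). Then u belongs to Q^{k−1,k,k}_{k+1} × Q^{k,k−1,k}_{k+1} × Q^{k,k,k−1}_{k+1}, and curl u belongs to Q^{k,k−1,k−1}_{k+2} × Q^{k−1,k,k−1}_{k+2} × Q^{k−1,k−1,k}_{k+2} on Ω∞°. (This is the membership underlying the inclusion P^{k−1} ⊂ U^{(1),k}(Ω) for the H(curl)-conforming pyramidal element.) -/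
noncomputable section

/-- The projective map `φ(x,y,z) = (x/(1+z), y/(1+z), z/(1+z))`. -/
def phi : ℝ × ℝ × ℝ → ℝ × ℝ × ℝ :=
  fun p => (p.1 / (1 + p.2.2), p.2.1 / (1 + p.2.2), p.2.2 / (1 + p.2.2))

/-- Evaluation of a three-variable polynomial at `φ(x,y,z)`. -/
def evalPhi (P : MvPolynomial (Fin 3) ℝ) (p : ℝ × ℝ × ℝ) : ℝ :=
  MvPolynomial.eval ![(phi p).1, (phi p).2.1, (phi p).2.2] P

/-- Partial derivative in `x`. -/
def pdx (f : ℝ × ℝ × ℝ → ℝ) (p : ℝ × ℝ × ℝ) : ℝ := fderiv ℝ f p ((1 : ℝ), (0 : ℝ), (0 : ℝ))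

/-- Partial derivative in `y`. -/
def pdy (f : ℝ × ℝ × ℝ → ℝ) (p : ℝ × ℝ × ℝ) : ℝ := fderiv ℝ f p ((0 : ℝ), (1 : ℝ), (0 : ℝ))

/-- Partial derivative in `z`. -/
def pdz (f : ℝ × ℝ × ℝ → ℝ) (p : ℝ × ℝ × ℝ) : ℝ := fderiv ℝ f p ((0 : ℝ), (0 : ℝ), (1 : ℝ))

/-- First component of the 1-form pullback `φ*P`. -/
def pb1 (P₁ : MvPolynomial (Fin 3) ℝ) : ℝ × ℝ × ℝ → ℝ :=
  fun q => evalPhi P₁ q / (1 + q.2.2)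

/-- Second component of the 1-form pullback `φ*P`. -/
def pb2 (P₂ : MvPolynomial (Fin 3) ℝ) : ℝ × ℝ × ℝ → ℝ :=
  fun q => evalPhi P₂ q / (1 + q.2.2)

/-- Third component of the 1-form pullback `φ*P`. -/
def pb3 (P₁ P₂ P₃ : MvPolynomial (Fin 3) ℝ) : ℝ × ℝ × ℝ → ℝ :=
  fun q => (-(q.1 * evalPhi P₁ q) - q.2.1 * evalPhi P₂ q + evalPhi P₃ q) /
    (1 + q.2.2) ^ 2

/-! Substituting `φ` into a monomial of degree `d` gives `x^a y^b z^c / (1+z)^d`, so every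
`(p ∘ φ) / (1+z)^j` with `deg p ≤ D` is a combination of weighted monomials with weight
`d + j ≤ D + j`; multiplying numerator and denominator by `(1+z)^(K-d-j)` raises the weight to
any `K ≥ D + j` at the cost of at most `K - j` powers of `z`. The components of `u` are of this
form (the third one after multiplying by `x` or `y`), and a direct computation shows that
`curl u` is the 2-form pullback of `W = curl P`, namely
`((W₁ + x W₃)/(1+z)³, (W₂ + y W₃)/(1+z)³, W₃/(1+z)²)`, where again `deg W ≤ k - 1`. -/

open MvPolynomial

theorem qmon_eq_sum {n K : ℕ} (a b c : ℕ) (hn : n ≠ 0) (hnK : n ≤ K) :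
    qmon n a b c =
      ∑ i ∈ Finset.range (K - n + 1), ((K - n).choose i : ℝ) • qmon K a b (c + i) := by
  ext ⟨x, y, z⟩
  simp only [qmon, Finset.sum_apply, Pi.smul_apply, smul_eq_mul]
  by_cases hz : 1 + z = 0
  · simp [hz, zero_pow hn, zero_pow (by omega : K ≠ 0)]
  have hK : (1 + z) ^ K = (1 + z) ^ n * (z + 1) ^ (K - n) := by
    rw [add_comm z, ← pow_add, Nat.add_sub_cancel' hnK]
  calc x ^ a * y ^ b * z ^ c / (1 + z) ^ n
      = x ^ a * y ^ b * z ^ c * (z + 1) ^ (K - n) / (1 + z) ^ K := by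
        rw [hK, mul_div_mul_right _ _ (pow_ne_zero _ (by rwa [add_comm]))]
    _ = _ := by
        rw [add_pow, Finset.mul_sum, Finset.sum_div]
        refine Finset.sum_congr rfl fun i _ => ?_
        ring

theorem qmon_mem_Qsp_s19 {l m n' : ℤ} {n K a b c : ℕ} (hn : n ≠ 0) (hnK : n ≤ K) (ha : (a : ℤ) ≤ l)
    (hb : (b : ℤ) ≤ m) (hc : (c : ℤ) + K - n ≤ n') : qmon n a b c ∈ Qsp l m n' K := by
  rw [qmon_eq_sum a b c hn hnK]
  refine Submodule.sum_mem _ fun i hi => Submodule.smul_mem _ _ (Submodule.subset_span ?_)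
  have := Finset.mem_range.mp hi
  exact ⟨a, b, c + i, ha, hb, by omega, rfl⟩

theorem fst_mul_mem_Qsp {l m n l' : ℤ} {K : ℕ} {f : ℝ × ℝ × ℝ → ℝ} (hf : f ∈ Qsp l m n K)
    (hl : l + 1 ≤ l') : (fun q => q.1 * f q) ∈ Qsp l' m n K := by
  suffices Qsp l m n K ≤ (Qsp l' m n K).comap (LinearMap.mulLeft ℝ fun q : ℝ × ℝ × ℝ => q.1) from
    this hf
  refine Submodule.span_le.mpr ?_
  rintro _ ⟨a, b, c, ha, hb, hc, rfl⟩
  refine Submodule.subset_span ⟨a + 1, b, c, by omega, hb, hc, ?_⟩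
  ext q
  simp [qmon, pow_succ]
  ring

theorem snd_mul_mem_Qsp {l m n m' : ℤ} {K : ℕ} {f : ℝ × ℝ × ℝ → ℝ} (hf : f ∈ Qsp l m n K)
    (hm : m + 1 ≤ m') : (fun q => q.2.1 * f q) ∈ Qsp l m' n K := by
  suffices Qsp l m n K ≤ (Qsp l m' n K).comap (LinearMap.mulLeft ℝ fun q : ℝ × ℝ × ℝ => q.2.1) from
    this hf
  refine Submodule.span_le.mpr ?_
  rintro _ ⟨a, b, c, ha, hb, hc, rfl⟩
  refine Submodule.subset_span ⟨a, b + 1, c, ha, by omega, hc, ?_⟩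
  ext q
  simp [qmon, pow_succ]
  ring

def evalPhiDiv (p : MvPolynomial (Fin 3) ℝ) (j : ℕ) : ℝ × ℝ × ℝ → ℝ :=
  fun q => evalPhi p q / (1 + q.2.2) ^ j

theorem evalPhiDiv_eq_sum (p : MvPolynomial (Fin 3) ℝ) {j : ℕ} (hj : j ≠ 0) :
    evalPhiDiv p j =
      ∑ s ∈ p.support, p.coeff s • qmon (s 0 + s 1 + s 2 + j) (s 0) (s 1) (s 2) := by
  ext ⟨x, y, z⟩
  simp only [evalPhiDiv, evalPhi, phi, eval_eq', Fin.prod_univ_three, Finset.sum_apply,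
    Pi.smul_apply, smul_eq_mul, qmon, Finset.sum_div]
  by_cases hz : 1 + z = 0
  · simp [hz, hj]
  refine Finset.sum_congr rfl fun s _ => ?_
  simp only [Matrix.cons_val, div_pow, pow_add]
  field_simp

theorem evalPhiDiv_mem_Qsp {l m n : ℤ} {j K : ℕ} (p : MvPolynomial (Fin 3) ℝ) (hj : j ≠ 0)
    (hK : p.totalDegree + j ≤ K) (hl : (p.totalDegree : ℤ) ≤ l) (hm : (p.totalDegree : ℤ) ≤ m)
    (hn : (K : ℤ) - j ≤ n) : evalPhiDiv p j ∈ Qsp l m n K := by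
  rw [evalPhiDiv_eq_sum p hj]
  refine Submodule.sum_mem _ fun s hs => Submodule.smul_mem _ _ (qmon_mem_Qsp_s19 ?_ ?_ ?_ ?_ ?_)
  all_goals
    have hs' : s 0 + s 1 + s 2 ≤ p.totalDegree := by
      simpa [Finsupp.sum_fintype, Fin.sum_univ_three] using le_totalDegree hs
    omega

theorem pb1_eq_evalPhiDiv (P : MvPolynomial (Fin 3) ℝ) : pb1 P = evalPhiDiv P 1 := by
  ext q
  simp [pb1, evalPhiDiv]

theorem pb2_eq_evalPhiDiv (P : MvPolynomial (Fin 3) ℝ) : pb2 P = evalPhiDiv P 1 := by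
  ext q
  simp [pb2, evalPhiDiv]

theorem pb3_eq_evalPhiDiv (P₁ P₂ P₃ : MvPolynomial (Fin 3) ℝ) :
    pb3 P₁ P₂ P₃ = -(fun q => q.1 * evalPhiDiv P₁ 2 q) - (fun q => q.2.1 * evalPhiDiv P₂ 2 q) +
      evalPhiDiv P₃ 2 := by
  ext q
  simp only [pb3, evalPhiDiv, Pi.add_apply, Pi.sub_apply, Pi.neg_apply]
  ring

theorem MvPolynomial.totalDegree_pderiv_le {σ R : Type*} [CommSemiring R] (i : σ)
    (p : MvPolynomial σ R) : (pderiv i p).totalDegree ≤ p.totalDegree := by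
  classical
  refine Finset.sup_le fun m hm => ?_
  have hm' : m + Finsupp.single i 1 ∈ p.support := by
    rw [mem_support_iff, coeff_pderiv] at hm
    exact mem_support_iff.mpr (left_ne_zero_of_mul hm)
  refine le_trans ?_ (le_totalDegree hm')
  rw [Finsupp.sum_add_index' (fun _ => rfl) (fun _ _ _ => rfl)]
  exact Nat.le_add_right _ _

theorem MvPolynomial.totalDegree_pderiv_sub_pderiv_le {σ R : Type*} [CommRing R]
    {p q : MvPolynomial σ R} {D : ℕ} (i j : σ) (hp : p.totalDegree ≤ D)
    (hq : q.totalDegree ≤ D) : (pderiv i p - pderiv j q).totalDegree ≤ D :=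
  (totalDegree_sub _ _).trans
    (max_le ((totalDegree_pderiv_le i p).trans hp) ((totalDegree_pderiv_le j q).trans hq))

theorem HasFDerivAt.fun_div {𝕜 E : Type*} [NontriviallyNormedField 𝕜] [NormedAddCommGroup E]
    [NormedSpace 𝕜 E] {f g : E → 𝕜} {f' g' : E →L[𝕜] 𝕜} {x : E}
    (hf : HasFDerivAt f f' x) (hg : HasFDerivAt g g' x) (hx : g x ≠ 0) :
    HasFDerivAt (fun y => f y / g y) ((g x ^ 2)⁻¹ • (g x • f' - f x • g')) x := by
  simp only [div_eq_mul_inv]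
  refine (hf.fun_mul ((hasDerivAt_inv hx).comp_hasFDerivAt x hg)).congr_fderiv
    (ContinuousLinearMap.ext fun v => ?_)
  simp
  field_simp
  ring

theorem MvPolynomial.hasFDerivAt_eval_comp {σ 𝕜 E : Type*} [Fintype σ]
    [NontriviallyNormedField 𝕜] [NormedAddCommGroup E] [NormedSpace 𝕜 E]
    (p : MvPolynomial σ 𝕜) {f : E → σ → 𝕜} {f' : σ → E →L[𝕜] 𝕜} {x : E}
    (hf : ∀ i, HasFDerivAt (fun y => f y i) (f' i) x) :
    HasFDerivAt (fun y => eval (f y) p) (∑ i, eval (f x) (pderiv i p) • f' i) x := by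
  classical
  induction p using MvPolynomial.induction_on with
  | C a =>
    simp only [eval_C]
    exact (hasFDerivAt_const a x).congr_fderiv (ContinuousLinearMap.ext fun v => by simp)
  | add p q hp hq =>
    simp only [map_add]
    refine (hp.fun_add hq).congr_fderiv (ContinuousLinearMap.ext fun v => ?_)
    simp [add_mul, Finset.sum_add_distrib]
  | mul_X p i hp =>
    simp only [map_mul, eval_X]
    refine (hp.fun_mul (hf i)).congr_fderiv (ContinuousLinearMap.ext fun v => ?_)
    simp [pderiv_X, Pi.single_apply, apply_ite (eval (f x)), ite_mul, add_mul,
      Finset.sum_add_distrib, Finset.mul_sum, mul_assoc]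

local notation "dx" => ContinuousLinearMap.fst ℝ ℝ (ℝ × ℝ)
local notation "dy" =>
  ContinuousLinearMap.comp (ContinuousLinearMap.fst ℝ ℝ ℝ) (ContinuousLinearMap.snd ℝ ℝ (ℝ × ℝ))
local notation "dz" =>
  ContinuousLinearMap.comp (ContinuousLinearMap.snd ℝ ℝ ℝ) (ContinuousLinearMap.snd ℝ ℝ (ℝ × ℝ))

theorem hasFDerivAt_one_add_z (q : ℝ × ℝ × ℝ) :
    HasFDerivAt (fun y : ℝ × ℝ × ℝ => 1 + y.2.2) dz q :=
  hasFDerivAt_snd.snd.const_add 1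

/-- The chain rule `d(p ∘ φ) = φ*(dp)`. -/
theorem hasFDerivAt_evalPhi (p : MvPolynomial (Fin 3) ℝ) {q : ℝ × ℝ × ℝ} (hq : 1 + q.2.2 ≠ 0) :
    HasFDerivAt (evalPhi p) (pb1 (pderiv 0 p) q • dx + pb2 (pderiv 1 p) q • dy +
      pb3 (pderiv 0 p) (pderiv 1 p) (pderiv 2 p) q • dz) q := by
  have hphi : ∀ i : Fin 3,
      HasFDerivAt (fun y => ![(phi y).1, (phi y).2.1, (phi y).2.2] i)
        (((1 + q.2.2) ^ 2)⁻¹ • ((1 + q.2.2) • ![dx, dy, dz] i - ![q.1, q.2.1, q.2.2] i • dz))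
        q := by
    intro i
    fin_cases i
    exacts [hasFDerivAt_fst.fun_div (hasFDerivAt_one_add_z q) hq,
      hasFDerivAt_snd.fst.fun_div (hasFDerivAt_one_add_z q) hq,
      hasFDerivAt_snd.snd.fun_div (hasFDerivAt_one_add_z q) hq]
  refine (hasFDerivAt_eval_comp p hphi).congr_fderiv (ContinuousLinearMap.ext fun v => ?_)
  simp [Fin.sum_univ_three, pb1, pb2, pb3, evalPhi]
  field_simp
  ring

theorem curl_pb_eq (P₁ P₂ P₃ : MvPolynomial (Fin 3) ℝ) {q : ℝ × ℝ × ℝ} (hq : 1 + q.2.2 ≠ 0) :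
    pdy (pb3 P₁ P₂ P₃) q - pdz (pb2 P₂) q = evalPhiDiv (pderiv 1 P₃ - pderiv 2 P₂) 3 q +
      q.1 * evalPhiDiv (pderiv 0 P₂ - pderiv 1 P₁) 3 q ∧
    pdz (pb1 P₁) q - pdx (pb3 P₁ P₂ P₃) q = evalPhiDiv (pderiv 2 P₁ - pderiv 0 P₃) 3 q +
      q.2.1 * evalPhiDiv (pderiv 0 P₂ - pderiv 1 P₁) 3 q ∧
    pdx (pb2 P₂) q - pdy (pb1 P₁) q = evalPhiDiv (pderiv 0 P₂ - pderiv 1 P₁) 2 q := by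
  have hE := fun P => hasFDerivAt_evalPhi P hq
  have h₁ : HasFDerivAt (pb1 P₁) _ q := (hE P₁).fun_div (hasFDerivAt_one_add_z q) hq
  have h₂ : HasFDerivAt (pb2 P₂) _ q := (hE P₂).fun_div (hasFDerivAt_one_add_z q) hq
  have h₃ : HasFDerivAt (pb3 P₁ P₂ P₃) _ q :=
    (((hasFDerivAt_fst.fun_mul (hE P₁)).fun_neg.fun_sub
      (hasFDerivAt_snd.fst.fun_mul (hE P₂))).fun_add (hE P₃)).fun_div
      ((hasFDerivAt_one_add_z q).pow 2) (pow_ne_zero 2 hq)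
  simp only [pdx, pdy, pdz, h₁.fderiv, h₂.fderiv, h₃.fderiv]
  refine ⟨?_, ?_, ?_⟩ <;> simp [pb1, pb2, pb3, evalPhiDiv, evalPhi] <;> field_simp <;> ring

/-- for a polynomial vector field `P = (P₁,P₂,P₃)` of total degree `≤ k−1`,
the 1-form pullback `u = (P₁∘φ/(1+z), P₂∘φ/(1+z), (−x·P₁∘φ − y·P₂∘φ + P₃∘φ)/(1+z)²)`
belongs componentwise to `Q^{k−1,k,k}_{k+1} × Q^{k,k−1,k}_{k+1} × Q^{k,k,k−1}_{k+1}` on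
`Ω∞°`, and `curl u` belongs to
`Q^{k,k−1,k−1}_{k+2} × Q^{k−1,k,k−1}_{k+2} × Q^{k−1,k−1,k}_{k+2}` on `Ω∞°`. -/
theorem pullback_one_form_of_polynomial (k : ℕ) (hk : 1 ≤ k)
    (P₁ P₂ P₃ : MvPolynomial (Fin 3) ℝ)
    (h₁ : P₁.totalDegree ≤ k - 1) (h₂ : P₂.totalDegree ≤ k - 1)
    (h₃ : P₃.totalDegree ≤ k - 1) :
    ∃ w₁ ∈ Qsp ((k : ℤ) - 1) k k (k + 1),
    ∃ w₂ ∈ Qsp k ((k : ℤ) - 1) k (k + 1),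
    ∃ w₃ ∈ Qsp k k ((k : ℤ) - 1) (k + 1),
    ∃ c₁ ∈ Qsp k ((k : ℤ) - 1) ((k : ℤ) - 1) (k + 2),
    ∃ c₂ ∈ Qsp ((k : ℤ) - 1) k ((k : ℤ) - 1) (k + 2),
    ∃ c₃ ∈ Qsp ((k : ℤ) - 1) ((k : ℤ) - 1) k (k + 2),
      ∀ q ∈ PyrInfInt,
        pb1 P₁ q = w₁ q ∧ pb2 P₂ q = w₂ q ∧ pb3 P₁ P₂ P₃ q = w₃ q ∧
        pdy (pb3 P₁ P₂ P₃) q - pdz (pb2 P₂) q = c₁ q ∧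
        pdz (pb1 P₁) q - pdx (pb3 P₁ P₂ P₃) q = c₂ q ∧
        pdx (pb2 P₂) q - pdy (pb1 P₁) q = c₃ q := by
  set W₁ := pderiv 1 P₃ - pderiv 2 P₂
  set W₂ := pderiv 2 P₁ - pderiv 0 P₃
  set W₃ := pderiv 0 P₂ - pderiv 1 P₁
  have hW₁ : W₁.totalDegree ≤ k - 1 := totalDegree_pderiv_sub_pderiv_le 1 2 h₃ h₂
  have hW₂ : W₂.totalDegree ≤ k - 1 := totalDegree_pderiv_sub_pderiv_le 2 0 h₁ h₃
  have hW₃ : W₃.totalDegree ≤ k - 1 := totalDegree_pderiv_sub_pderiv_le 0 1 h₂ h₁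
  refine ⟨pb1 P₁, ?_, pb2 P₂, ?_, pb3 P₁ P₂ P₃, ?_,
    evalPhiDiv W₁ 3 + fun q => q.1 * evalPhiDiv W₃ 3 q, ?_,
    evalPhiDiv W₂ 3 + fun q => q.2.1 * evalPhiDiv W₃ 3 q, ?_,
    evalPhiDiv W₃ 2, ?_,
    fun q hq => ⟨rfl, rfl, rfl, curl_pb_eq P₁ P₂ P₃ (by linarith [hq.2.2.2.2] : 0 < 1 + q.2.2).ne'⟩⟩
  · rw [pb1_eq_evalPhiDiv]
    apply evalPhiDiv_mem_Qsp <;> omega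
  · rw [pb2_eq_evalPhiDiv]
    apply evalPhiDiv_mem_Qsp <;> omega
  · rw [pb3_eq_evalPhiDiv]
    refine add_mem (sub_mem
      (neg_mem (fst_mul_mem_Qsp (l := k - 1) (evalPhiDiv_mem_Qsp P₁ ?_ ?_ ?_ ?_ ?_) ?_))
      (snd_mul_mem_Qsp (m := k - 1) (evalPhiDiv_mem_Qsp P₂ ?_ ?_ ?_ ?_ ?_) ?_))
      (evalPhiDiv_mem_Qsp P₃ ?_ ?_ ?_ ?_ ?_) <;> omega
  · refine add_mem (evalPhiDiv_mem_Qsp W₁ ?_ ?_ ?_ ?_ ?_)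
      (fst_mul_mem_Qsp (l := k - 1) (evalPhiDiv_mem_Qsp W₃ ?_ ?_ ?_ ?_ ?_) ?_) <;> omega
  · refine add_mem (evalPhiDiv_mem_Qsp W₂ ?_ ?_ ?_ ?_ ?_)
      (snd_mul_mem_Qsp (m := k - 1) (evalPhiDiv_mem_Qsp W₃ ?_ ?_ ?_ ?_ ?_) ?_) <;> omega
  · apply evalPhiDiv_mem_Qsp <;> omega
end
end
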